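/- Let the compact set A and lower semicontinuous kernel K satisfy assumptions (A1)-(A4). Then lim_{N→∞} 𝒫(A,N) = W_K, where 𝒫(A,N) = sup_{ω_N ∈ A^N} P(ω_N) is the optimal N-point polarization of A. -/

import Mathlib

open MeasureTheory Filter Topology BoundedContinuousFunction NNReal ENNReal

noncomputable section

/-- The potential of a measure `μ` with respect to the kernel `K x y = f (nndist x y)`. -/
def potential {t : ℕ} (f : ℝ≥0 → ℝ≥0∞) (μ : Measure (EuclideanSpace ℝ (Fin t)))
    (x : EuclideanSpace ℝ (Fin t)) : ℝ≥0∞ :=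
  ∫⁻ y, f (nndist x y) ∂μ

/-- The energy `I[μ] = ∫∫ K(x,y) dμ(x) dμ(y)`. -/
def energy {t : ℕ} (f : ℝ≥0 → ℝ≥0∞) (μ : Measure (EuclideanSpace ℝ (Fin t))) : ℝ≥0∞ :=
  ∫⁻ x, potential f μ x ∂μ

/-- The normalized discrete potential `(1/N) ∑_{y ∈ ω} K(x,y)` of a configuration. -/
def discretePotential {t : ℕ} (f : ℝ≥0 → ℝ≥0∞) {N : ℕ}
    (ω : Fin N → EuclideanSpace ℝ (Fin t)) (x : EuclideanSpace ℝ (Fin t)) : ℝ≥0∞ :=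
  (N : ℝ≥0∞)⁻¹ * ∑ i, f (nndist x (ω i))

/-- The polarization `P(ω) = min_{x ∈ A} (1/N) ∑_{y ∈ ω} K(x,y)` of a configuration. -/
def polarization {t : ℕ} (f : ℝ≥0 → ℝ≥0∞) (A : Set (EuclideanSpace ℝ (Fin t))) {N : ℕ}
    (ω : Fin N → EuclideanSpace ℝ (Fin t)) : ℝ≥0∞ :=
  ⨅ x ∈ A, discretePotential f ω x

/-- The optimal `N`-point polarization `𝒫(A,N)`. -/
def maxPolarization {t : ℕ} (f : ℝ≥0 → ℝ≥0∞) (A : Set (EuclideanSpace ℝ (Fin t)))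
    (N : ℕ) : ℝ≥0∞ :=
  ⨆ (ω : Fin N → EuclideanSpace ℝ (Fin t)) (_ : ∀ i, ω i ∈ A), polarization f A ω

/-- The normalized counting measure of a configuration. -/
def countingMeasure {t : ℕ} {N : ℕ} (ω : Fin N → EuclideanSpace ℝ (Fin t)) :
    Measure (EuclideanSpace ℝ (Fin t)) :=
  (N : ℝ≥0∞)⁻¹ • ∑ i, Measure.dirac (ω i)

/-- Weak convergence of a sequence of measures: integrals of every bounded continuous
function converge. -/
def WeaklyTendsto {t : ℕ} (ν : ℕ → Measure (EuclideanSpace ℝ (Fin t)))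
    (μ : Measure (EuclideanSpace ℝ (Fin t))) : Prop :=
  ∀ g : EuclideanSpace ℝ (Fin t) →ᵇ ℝ,
    Tendsto (fun N => ∫ x, g x ∂(ν N)) atTop (𝓝 (∫ x, g x ∂μ))

/-!
For the upper bound, integrate the discrete potential of a configuration in `A` against `μeq`:
this gives the average of `U^{μeq}` over the points, i.e. `W`, so every polarization is at most
`W`.

For the lower bound, fix `b < W`. The `n`-Lipschitz envelopes of `min f n` increase to `f`, so
by monotone convergence and a Dini-type compactness argument the potential of `μeq` for one of
them already exceeds `b` on all of `A`. For such a bounded Lipschitz kernel, the potential of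
`μeq` is uniformly approximated by that of an `N`-point configuration: partition `A` into cells
`E j` of small diameter and put `⌊N μeq (E j)⌋` points in each.
-/

section LipschitzEnvelope

variable {α : Type*} [PseudoEMetricSpace α]

lemma lowerSemicontinuous_of_le_add_mul_edist {F : α → ℝ≥0∞} {K : ℝ≥0∞} (hK : K ≠ ⊤)
    (hF : ∀ x y, F x ≤ F y + K * edist x y) : LowerSemicontinuous F := by
  intro x c hc
  have hlim : Tendsto (fun y => K * edist x y) (𝓝 x) (𝓝 0) := by
    simpa using ENNReal.Tendsto.const_mul
      ((tendsto_const_nhds (x := x) (f := 𝓝 x)).edist tendsto_id) (Or.inr hK)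
  filter_upwards [hlim.eventually (gt_mem_nhds (tsub_pos_of_lt hc))] with y hy
  by_contra! hyc
  have : F x < F x := calc
    F x ≤ F y + K * edist x y := hF x y
    _ < c + (F x - c) :=
        ENNReal.add_lt_add_of_le_of_lt (hyc.trans_lt (hc.trans_le le_top)).ne hyc hy
    _ = F x := add_tsub_cancel_of_le hc.le
  exact this.false

/-- The largest `n`-Lipschitz minorant of `min f n` (a Pasch–Hausdorff envelope). -/
def lipschitzEnvelope (f : α → ℝ≥0∞) (n : ℕ) (x : α) : ℝ≥0∞ :=
  ⨅ y, min (f y) n + n * edist x y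

variable (f : α → ℝ≥0∞)

lemma lipschitzEnvelope_le_min (n : ℕ) (x : α) : lipschitzEnvelope f n x ≤ min (f x) n :=
  (iInf_le (fun y => min (f y) n + (n : ℝ≥0∞) * edist x y) x).trans_eq (by simp)

lemma lipschitzEnvelope_le_self (n : ℕ) (x : α) : lipschitzEnvelope f n x ≤ f x :=
  (lipschitzEnvelope_le_min f n x).trans (min_le_left _ _)

lemma lipschitzEnvelope_le_natCast (n : ℕ) (x : α) : lipschitzEnvelope f n x ≤ n :=
  (lipschitzEnvelope_le_min f n x).trans (min_le_right _ _)

lemma lipschitzEnvelope_le_add_mul_edist (n : ℕ) (x x' : α) :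
    lipschitzEnvelope f n x ≤ lipschitzEnvelope f n x' + n * edist x x' := by
  simp only [lipschitzEnvelope, ENNReal.iInf_add]
  refine le_iInf fun y => (iInf_le _ y).trans ?_
  calc min (f y) n + n * edist x y ≤ min (f y) n + n * (edist x' y + edist x x') := by
        gcongr
        exact (edist_triangle x x' y).trans_eq (add_comm _ _)
    _ = min (f y) n + n * edist x' y + n * edist x x' := by ring

lemma lowerSemicontinuous_lipschitzEnvelope (n : ℕ) :
    LowerSemicontinuous (lipschitzEnvelope f n) :=
  lowerSemicontinuous_of_le_add_mul_edist (ENNReal.natCast_ne_top n)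
    (lipschitzEnvelope_le_add_mul_edist f n)

lemma lipschitzEnvelope_mono : Monotone (lipschitzEnvelope f) := by
  intro m n hmn x
  refine iInf_mono fun y => ?_
  have : (m : ℝ≥0∞) ≤ n := by exact_mod_cast hmn
  gcongr

lemma iSup_lipschitzEnvelope {f : α → ℝ≥0∞} (hf : LowerSemicontinuous f) (x : α) :
    ⨆ n : ℕ, lipschitzEnvelope f n x = f x := by
  refine le_antisymm (iSup_le fun n => lipschitzEnvelope_le_self f n x)
    (le_of_forall_lt fun c hc => ?_)
  obtain ⟨c', hcc', hc'⟩ := exists_between hc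
  obtain ⟨δ, hδ, hball⟩ := EMetric.mem_nhds_iff.1 (hf x c' hc')
  set r := min δ 1
  have hr0 : r ≠ 0 := (lt_min hδ one_pos).ne'
  have hrtop : r ≠ ⊤ := ((min_le_right _ _).trans_lt ENNReal.one_lt_top).ne
  obtain ⟨n, hn⟩ := ENNReal.exists_nat_gt (r := c' / r + c')
    (by finiteness [(ENNReal.div_lt_top hc'.ne_top hr0).ne])
  refine hcc'.trans_le (le_iSup_of_le n (le_iInf fun y => ?_))
  rcases lt_or_ge (edist x y) r with hxy | hxy
  · have hy : c' < f y := hball (Metric.mem_eball'.2 (hxy.trans_le (min_le_left _ _)))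
    exact (le_min hy.le (le_add_self.trans hn.le)).trans le_self_add
  · refine le_add_left ?_
    calc c' ≤ n * r :=
          ((ENNReal.div_lt_iff (Or.inl hr0) (Or.inl hrtop)).1 (le_self_add.trans_lt hn)).le
      _ ≤ n * edist x y := by gcongr

end LipschitzEnvelope

lemma IsCompact.exists_forall_lt_of_lt_iSup {X β : Type*} [TopologicalSpace X]
    [CompleteLinearOrder β] {A : Set X} (hA : IsCompact A) {P : ℕ → X → β}
    (hP : ∀ n, LowerSemicontinuous (P n)) (hmono : Monotone P) {b : β}
    (hb : ∀ x ∈ A, b < ⨆ n, P n x) : ∃ n, ∀ x ∈ A, b < P n x :=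
  hA.elim_directed_cover (fun n => P n ⁻¹' Set.Ioi b) (fun n => (hP n).isOpen_preimage b)
    (fun x hx => Set.mem_iUnion.2 (lt_iSup_iff.1 (hb x hx)))
    (Monotone.directed_le fun _ _ hmn _ hx => lt_of_lt_of_le hx (hmono hmn _))

lemma exists_fin_sum_mul_le_sum_comp {ι : Type*} [Fintype ι] [Nonempty ι] (n : ι → ℕ) {N : ℕ}
    (hN : ∑ j, n j ≤ N) :
    ∃ σ : Fin N → ι, ∀ h : ι → ℝ≥0∞, ∑ j, (n j : ℝ≥0∞) * h j ≤ ∑ i, h (σ i) := by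
  let e : Fin N ≃ (Σ j, Fin (n j)) ⊕ Fin (N - ∑ j, n j) :=
    Fintype.equivOfCardEq <| by
      simp only [Fintype.card_fin, Fintype.card_sum, Fintype.card_sigma]
      omega
  refine ⟨fun i => Sum.elim Sigma.fst (fun _ => Classical.arbitrary ι) (e i), fun h => ?_⟩
  rw [← e.symm.sum_comp, Fintype.sum_sum_type, Fintype.sum_sigma]
  simp only [Equiv.apply_symm_apply, Sum.elim_inl, Finset.sum_const, Finset.card_univ,
    Fintype.card_fin, nsmul_eq_mul]
  exact le_self_add

lemma exists_fin_sum_mul_le {ι : Type*} [Fintype ι] (m : ι → ℝ≥0∞) (hm : ∑ j, m j = 1) {N : ℕ}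
    (hN : N ≠ 0) :
    ∃ σ : Fin N → ι, ∀ h : ι → ℝ≥0∞,
      ∑ j, m j * h j ≤ (N : ℝ≥0∞)⁻¹ * (∑ i, h (σ i) + ∑ j, h j) := by
  have : Nonempty ι := by
    by_contra hι
    simp [not_nonempty_iff.1 hι] at hm
  have hNm (j : ι) : (N : ℝ≥0∞) * m j ≠ ⊤ :=
    ENNReal.mul_ne_top (ENNReal.natCast_ne_top N) (ne_top_of_le_ne_top ENNReal.one_ne_top
      (hm ▸ Finset.single_le_sum (fun _ _ => zero_le) (Finset.mem_univ j)))
  let n : ι → ℕ := fun j => ⌊((N : ℝ≥0∞) * m j).toNNReal⌋₊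
  have hn_le : ∀ j, (n j : ℝ≥0∞) ≤ N * m j := fun j => by
    rw [← ENNReal.coe_toNNReal (hNm j)]
    exact_mod_cast Nat.floor_le zero_le
  have hle_n : ∀ j, (N : ℝ≥0∞) * m j ≤ n j + 1 := fun j => by
    rw [← ENNReal.coe_toNNReal (hNm j)]
    exact_mod_cast (Nat.lt_floor_add_one _).le
  have hsum_n : ∑ j, n j ≤ N := by
    have : ((∑ j, n j : ℕ) : ℝ≥0∞) ≤ N := by
      calc ((∑ j, n j : ℕ) : ℝ≥0∞) = ∑ j, (n j : ℝ≥0∞) := Nat.cast_sum _ _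
        _ ≤ ∑ j, (N : ℝ≥0∞) * m j := Finset.sum_le_sum fun j _ => hn_le j
        _ = N := by rw [← Finset.mul_sum, hm, mul_one]
    exact_mod_cast this
  obtain ⟨σ, hσ⟩ := exists_fin_sum_mul_le_sum_comp n hsum_n
  refine ⟨σ, fun h => ?_⟩
  have hN' : (N : ℝ≥0∞) ≠ 0 := by exact_mod_cast hN
  calc ∑ j, m j * h j = (N : ℝ≥0∞)⁻¹ * ∑ j, (N * m j) * h j := by
        simp only [Finset.mul_sum, ← mul_assoc,
          ENNReal.inv_mul_cancel hN' (ENNReal.natCast_ne_top N), one_mul]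
    _ ≤ (N : ℝ≥0∞)⁻¹ * ∑ j, ((n j : ℝ≥0∞) + 1) * h j := by gcongr with j; exact hle_n j
    _ = (N : ℝ≥0∞)⁻¹ * (∑ j, (n j : ℝ≥0∞) * h j + ∑ j, h j) := by
        simp only [add_mul, one_mul, Finset.sum_add_distrib]
    _ ≤ (N : ℝ≥0∞)⁻¹ * (∑ i, h (σ i) + ∑ j, h j) := by gcongr; exact hσ h

section PseudoEMetricSpace

variable {X : Type*} [PseudoEMetricSpace X] [MeasurableSpace X] [OpensMeasurableSpace X]
  {A : Set X}

lemma IsCompact.exists_finite_partition_subset_eball (hA : IsCompact A) {δ : ℝ≥0∞} (hδ : δ ≠ 0) :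
    ∃ (k : ℕ) (p : Fin k → X) (E : Fin k → Set X), (∀ j, p j ∈ A) ∧
      (∀ j, MeasurableSet (E j)) ∧ Pairwise (Function.onFun Disjoint E) ∧ A ⊆ ⋃ j, E j ∧
      ∀ j, E j ⊆ Metric.eball (p j) δ := by
  obtain ⟨t, htA, hcover⟩ :=
    hA.elim_nhds_subcover (fun x => Metric.eball x δ) fun x _ => Metric.eball_mem_nhds x hδ.bot_lt
  let p : Fin t.card → X := fun j => t.equivFin.symm j
  refine ⟨t.card, p, disjointed fun j => Metric.eball (p j) δ, fun j => htA _ (t.equivFin.symm j).2,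
    fun j => disjointedRec (fun _ _ hs => hs.diff measurableSet_eball) measurableSet_eball,
    disjoint_disjointed _, ?_, disjointed_le _⟩
  rw [iUnion_disjointed]
  intro x hx
  obtain ⟨z, hz, hxz⟩ := Set.mem_iUnion₂.1 (hcover hx)
  exact Set.mem_iUnion.2 ⟨t.equivFin ⟨z, hz⟩, by simpa [p] using hxz⟩

lemma IsCompact.exists_lintegral_le_sum_add (hA : IsCompact A) {μ : Measure X}
    [IsProbabilityMeasure μ] (hμA : μ Aᶜ = 0) {δ : ℝ≥0∞} (hδ : δ ≠ 0) :
    ∃ (k : ℕ) (p : Fin k → X) (m : Fin k → ℝ≥0∞), (∀ j, p j ∈ A) ∧ ∑ j, m j = 1 ∧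
      ∀ (h : X → ℝ≥0∞) (K : ℝ≥0∞), (∀ y y', h y ≤ h y' + K * edist y y') →
        ∫⁻ y, h y ∂μ ≤ ∑ j, m j * h (p j) + K * δ := by
  obtain ⟨k, p, E, hpA, hE, hdisj, hAE, hEp⟩ := hA.exists_finite_partition_subset_eball hδ
  have hfull : μ (⋃ j, E j)ᶜ = 0 := measure_mono_null (Set.compl_subset_compl.2 hAE) hμA
  have hsum : ∑ j, μ (E j) = 1 := by
    rw [← tsum_fintype (L := .unconditional _), ← measure_iUnion hdisj hE,
      ← prob_compl_eq_zero_iff (MeasurableSet.iUnion hE), hfull]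
  refine ⟨k, p, fun j => μ (E j), hpA, hsum, fun h K hh => ?_⟩
  calc ∫⁻ y, h y ∂μ = ∫⁻ y in ⋃ j, E j, h y ∂μ := by
        rw [Measure.restrict_eq_self_of_ae_mem (s := ⋃ j, E j) (mem_ae_iff.2 hfull)]
    _ = ∑ j, ∫⁻ y in E j, h y ∂μ := by rw [lintegral_iUnion hE hdisj, tsum_fintype]
    _ ≤ ∑ j, ∫⁻ _ in E j, (h (p j) + K * δ) ∂μ := by
        refine Finset.sum_le_sum fun j _ => setLIntegral_mono' (hE j) fun y hy => ?_
        exact (hh y (p j)).trans (by gcongr; exact (Metric.mem_eball.1 (hEp j hy)).le)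
    _ = ∑ j, (μ (E j) * h (p j) + K * δ * μ (E j)) :=
        Finset.sum_congr rfl fun j _ => by rw [setLIntegral_const]; ring
    _ = ∑ j, μ (E j) * h (p j) + K * δ := by
        rw [Finset.sum_add_distrib, ← Finset.mul_sum, hsum, mul_one]

end PseudoEMetricSpace

section PseudoMetricSpace

variable {X : Type*} [PseudoMetricSpace X]

lemma edist_nndist_nndist_le (x x' y : X) : edist (nndist x y) (nndist x' y) ≤ edist x x' := by
  rw [edist_dist, edist_dist, NNReal.dist_eq, coe_nndist, coe_nndist]
  exact ENNReal.ofReal_le_ofReal (dist_dist_dist_le_left x x' y)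

lemma comp_nndist_le_add_mul_edist {g : ℝ≥0 → ℝ≥0∞} {K : ℝ≥0∞}
    (hg : ∀ r r', g r ≤ g r' + K * edist r r') (x x' y : X) :
    g (nndist x y) ≤ g (nndist x' y) + K * edist x x' :=
  (hg _ _).trans (by gcongr; exact edist_nndist_nndist_le x x' y)

variable [MeasurableSpace X] {μ : Measure X} [IsProbabilityMeasure μ]

lemma lintegral_comp_nndist_le_add_mul_edist {g : ℝ≥0 → ℝ≥0∞} {K : ℝ≥0∞}
    (hg : ∀ r r', g r ≤ g r' + K * edist r r') (x x' : X) :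
    ∫⁻ y, g (nndist x y) ∂μ ≤ ∫⁻ y, g (nndist x' y) ∂μ + K * edist x x' :=
  calc ∫⁻ y, g (nndist x y) ∂μ ≤ ∫⁻ y, (g (nndist x' y) + K * edist x x') ∂μ :=
        lintegral_mono fun y => comp_nndist_le_add_mul_edist hg x x' y
    _ = ∫⁻ y, g (nndist x' y) ∂μ + K * edist x x' := by
        rw [lintegral_add_right _ measurable_const, lintegral_const, measure_univ, mul_one]

variable [OpensMeasurableSpace X] {A : Set X}

lemma IsCompact.exists_forall_lt_lintegral_lipschitzEnvelope (hA : IsCompact A)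
    {f : ℝ≥0 → ℝ≥0∞} (hf : LowerSemicontinuous f) {b : ℝ≥0∞}
    (hb : ∀ x ∈ A, b < ∫⁻ y, f (nndist x y) ∂μ) :
    ∃ n : ℕ, ∀ x ∈ A, b < ∫⁻ y, lipschitzEnvelope f n (nndist x y) ∂μ := by
  have hmeas (n : ℕ) (x : X) : Measurable fun y => lipschitzEnvelope f n (nndist x y) :=
    (lowerSemicontinuous_lipschitzEnvelope f n).measurable.comp
      (continuous_const.nndist continuous_id).measurable
  refine hA.exists_forall_lt_of_lt_iSup (fun n => lowerSemicontinuous_of_le_add_mul_edist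
      (ENNReal.natCast_ne_top n)
      (lintegral_comp_nndist_le_add_mul_edist (lipschitzEnvelope_le_add_mul_edist f n)))
    (fun m n hmn x => lintegral_mono fun y => lipschitzEnvelope_mono f hmn _) fun x hx => ?_
  rw [← lintegral_iSup (hmeas · x) fun m n hmn y => lipschitzEnvelope_mono f hmn _]
  simpa only [iSup_lipschitzEnvelope hf] using hb x hx

lemma IsCompact.eventually_exists_lintegral_le_average_add (hA : IsCompact A) (hμA : μ Aᶜ = 0)
    {g : ℝ≥0 → ℝ≥0∞} {M K : ℝ≥0∞} (hM : M ≠ ⊤) (hK : K ≠ ⊤) (hgM : ∀ r, g r ≤ M)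
    (hgK : ∀ r r', g r ≤ g r' + K * edist r r') {ε : ℝ≥0∞} (hε : ε ≠ 0) :
    ∀ᶠ N : ℕ in atTop, ∃ ω : Fin N → X, (∀ i, ω i ∈ A) ∧
      ∀ x, ∫⁻ y, g (nndist x y) ∂μ ≤ (N : ℝ≥0∞)⁻¹ * ∑ i, g (nndist x (ω i)) + ε := by
  obtain ⟨δ, hδ, hδK⟩ := ENNReal.exists_pos_mul_lt hK (ENNReal.half_pos hε).ne'
  obtain ⟨k, p, m, hpA, hm, happrox⟩ := hA.exists_lintegral_le_sum_add hμA hδ.ne'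
  have hlim : Tendsto (fun N : ℕ => (N : ℝ≥0∞)⁻¹ * (k * M)) atTop (𝓝 0) := by
    simpa using ENNReal.Tendsto.mul_const ENNReal.tendsto_inv_nat_nhds_zero
      (Or.inr (by finiteness))
  filter_upwards [hlim.eventually (gt_mem_nhds (ENNReal.half_pos hε)), eventually_ne_atTop 0]
    with N hNk hN
  obtain ⟨σ, hσ⟩ := exists_fin_sum_mul_le m hm hN
  refine ⟨p ∘ σ, fun i => hpA _, fun x => ?_⟩
  have hsumM : ∑ j, g (nndist x (p j)) ≤ k * M := by
    simpa using Finset.sum_le_sum fun j (_ : j ∈ Finset.univ) => hgM (nndist x (p j))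
  calc ∫⁻ y, g (nndist x y) ∂μ ≤ ∑ j, m j * g (nndist x (p j)) + K * δ :=
        happrox _ K fun y y' => by
          simpa only [nndist_comm x] using comp_nndist_le_add_mul_edist hgK y y' x
    _ ≤ (N : ℝ≥0∞)⁻¹ * (∑ i, g (nndist x (p (σ i))) + ∑ j, g (nndist x (p j))) + ε / 2 :=
        add_le_add (hσ _) (by rw [mul_comm]; exact hδK.le)
    _ ≤ (N : ℝ≥0∞)⁻¹ * ∑ i, g (nndist x (p (σ i))) + (ε / 2 + ε / 2) := by
        rw [mul_add, add_assoc]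
        gcongr
        exact (mul_le_mul_right hsumM _).trans hNk.le
    _ = (N : ℝ≥0∞)⁻¹ * ∑ i, g (nndist x ((p ∘ σ) i)) + ε := by rw [ENNReal.add_halves]; rfl

end PseudoMetricSpace

section Polarization

variable {t : ℕ} {A : Set (EuclideanSpace ℝ (Fin t))} {f : ℝ≥0 → ℝ≥0∞}
  {μ : Measure (EuclideanSpace ℝ (Fin t))}

lemma lintegral_discretePotential (hf : Measurable f) {N : ℕ}
    (ω : Fin N → EuclideanSpace ℝ (Fin t)) :
    ∫⁻ x, discretePotential f ω x ∂μ = (N : ℝ≥0∞)⁻¹ * ∑ i, potential f μ (ω i) := by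
  have hmeas (i : Fin N) : Measurable fun x => f (nndist x (ω i)) :=
    hf.comp (continuous_id.nndist continuous_const).measurable
  simp only [discretePotential, potential]
  rw [lintegral_const_mul _ (Finset.measurable_sum _ fun i _ => hmeas i),
    lintegral_finsetSum _ fun i _ => hmeas i]
  simp only [nndist_comm]

lemma polarization_le_lintegral_discretePotential [IsProbabilityMeasure μ] (hμA : μ Aᶜ = 0)
    {N : ℕ} (ω : Fin N → EuclideanSpace ℝ (Fin t)) :
    polarization f A ω ≤ ∫⁻ x, discretePotential f ω x ∂μ :=
  calc polarization f A ω = ∫⁻ _, polarization f A ω ∂μ := by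
        rw [lintegral_const, measure_univ, mul_one]
    _ ≤ ∫⁻ x, discretePotential f ω x ∂μ := lintegral_mono_ae <| by
        filter_upwards [mem_ae_iff.2 hμA] with x hx using biInf_le _ hx

lemma maxPolarization_le (hf : Measurable f) [IsProbabilityMeasure μ] (hμA : μ Aᶜ = 0)
    {W : ℝ≥0∞} (hW : ∀ x ∈ A, potential f μ x = W) {N : ℕ} (hN : N ≠ 0) :
    maxPolarization f A N ≤ W := by
  refine iSup₂_le fun ω hω => (polarization_le_lintegral_discretePotential hμA ω).trans_eq ?_
  rw [lintegral_discretePotential hf, Finset.sum_congr rfl fun i _ => hW _ (hω i),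
    Finset.sum_const, Finset.card_univ, Fintype.card_fin, nsmul_eq_mul, ← mul_assoc,
    ENNReal.inv_mul_cancel (by exact_mod_cast hN) (ENNReal.natCast_ne_top N), one_mul]

lemma eventually_lt_maxPolarization (hA : IsCompact A) (hf : LowerSemicontinuous f)
    [IsProbabilityMeasure μ] (hμA : μ Aᶜ = 0) {c : ℝ≥0∞}
    (hc : c < ⨅ x ∈ A, potential f μ x) : ∀ᶠ N in atTop, c < maxPolarization f A N := by
  obtain ⟨c', hcc', hc'⟩ := exists_between hc
  obtain ⟨b, hc'b, hb⟩ := exists_between hc'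
  obtain ⟨n, hn⟩ := hA.exists_forall_lt_lintegral_lipschitzEnvelope (μ := μ) hf
    fun x hx => hb.trans_le (biInf_le _ hx)
  filter_upwards [hA.eventually_exists_lintegral_le_average_add hμA (ENNReal.natCast_ne_top n)
    (ENNReal.natCast_ne_top n) (lipschitzEnvelope_le_natCast f n)
    (lipschitzEnvelope_le_add_mul_edist f n) (tsub_pos_of_lt hc'b).ne'] with N ⟨ω, hωA, hω⟩
  have hpol : c' ≤ polarization f A ω := le_iInf₂ fun x hx => by
    have : b ≤ discretePotential f ω x + (b - c') := calc
      b ≤ ∫⁻ y, lipschitzEnvelope f n (nndist x y) ∂μ := (hn x hx).le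
      _ ≤ (N : ℝ≥0∞)⁻¹ * ∑ i, lipschitzEnvelope f n (nndist x (ω i)) + (b - c') := hω x
      _ ≤ discretePotential f ω x + (b - c') := by
          unfold discretePotential
          gcongr with i
          exact lipschitzEnvelope_le_self f n _
    rwa [← tsub_le_iff_right, ENNReal.sub_sub_cancel hb.ne_top hc'b.le] at this
  exact hcc'.trans_le (hpol.trans (le_iSup₂ (f := fun ω (_ : ∀ i, ω i ∈ A) => polarization f A ω)
    ω hωA))

end Polarization

theorem maxPolarization_tendsto_general
    {t : ℕ} (A : Set (EuclideanSpace ℝ (Fin t))) (hA : IsCompact A)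
    (f : ℝ≥0 → ℝ≥0∞) (hf : LowerSemicontinuous f)
    (μeq : Measure (EuclideanSpace ℝ (Fin t))) (hμeq : IsProbabilityMeasure μeq)
    (hμeqA : μeq Aᶜ = 0)
    (W : ℝ≥0∞) (hA4 : ∀ x ∈ A, potential f μeq x = W) :
    Tendsto (fun N => maxPolarization f A N) atTop (𝓝 W) := by
  refine tendsto_order.2 ⟨fun c hc => ?_, fun c hc => ?_⟩
  · exact eventually_lt_maxPolarization hA hf hμeqA
      (hc.trans_le (le_iInf₂ fun x hx => (hA4 x hx).ge))
  · filter_upwards [eventually_ne_atTop 0] with N hN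
    exact (maxPolarization_le hf.measurable hμeqA hA4 hN).trans_lt hc

theorem maxPolarization_tendsto
    {t : ℕ} (A : Set (EuclideanSpace ℝ (Fin t))) (hA : IsCompact A)
    (f : ℝ≥0 → ℝ≥0∞) (hf : LowerSemicontinuous f)
    (μeq : Measure (EuclideanSpace ℝ (Fin t))) (hμeq : IsProbabilityMeasure μeq)
    (hμeqA : μeq Aᶜ = 0)
    (hA1 : ∃ μ : Measure (EuclideanSpace ℝ (Fin t)),
      IsProbabilityMeasure μ ∧ μ Aᶜ = 0 ∧ energy f μ < ⊤)
    (hA2min : ∀ ν : Measure (EuclideanSpace ℝ (Fin t)),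
      IsProbabilityMeasure ν → ν Aᶜ = 0 → energy f μeq ≤ energy f ν)
    (hA2uniq : ∀ ν : Measure (EuclideanSpace ℝ (Fin t)),
      IsProbabilityMeasure ν → ν Aᶜ = 0 → energy f ν = energy f μeq → ν = μeq)
    (hA3 : ∀ x ∈ A, ∀ U : Set (EuclideanSpace ℝ (Fin t)), IsOpen U → x ∈ U → 0 < μeq U)
    (W : ℝ≥0∞) (hW : 0 < W) (hA4 : ∀ x ∈ A, potential f μeq x = W) :
    Tendsto (fun N => maxPolarization f A N) atTop (𝓝 W) :=
  maxPolarization_tendsto_general A hA f hf μeq hμeq hμeqA W hA4
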